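/- For nonnegative integers d_1, ..., d_m and formal variables x, q, the following identity of rational functions (q-series) holds: (x^2; q^2)_{d_1 + ... + d_m} / ((q^2;q^2)_{d_1} ... (q^2;q^2)_{d_m}) = \sum over all decompositions alpha_i + beta_i = d_i (for i = 1,...,m) of (-x^2 q^{-1})^{alpha_1 + ... + alpha_m} * q^{alpha_1^2 + ... + alpha_m^2 + 2 * \sum_{i=1}^{m-1} alpha_{i+1} (d_1 + ... + d_i)} / ((q^2;q^2)_{alpha_1} ... (q^2;q^2)_{alpha_m} (q^2;q^2)_{beta_1} ... (q^2;q^2)_{beta_m}). -/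

import Mathlib

/-!
Write `s_i = d_1 + ⋯ + d_{i-1}`. The product `(x²; q²)_{d_1 + ⋯ + d_m}` splits into the blocks
`(x² q^{2 s_i}; q²)_{d_i}`, and by the `q`-binomial theorem each block divided by `(q²; q²)_{d_i}`
is `∑_{α + β = d_i} (-x² q^{2 s_i})^α q^{α² - α} / ((q²; q²)_α (q²; q²)_β)`. Multiplying out the
`m` sums gives the sum over all `α`, the shift `q^{2 s_i}` producing the cross term `q^{2 α_i s_i}`.
-/

open Finset

/-- The Pochhammer symbol `(x; q)_n = ∏_{j=0}^{n-1} (1 - x q^j)`. -/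
noncomputable def qPoch {K : Type*} [Field K] (x q : K) (n : ℕ) : K :=
  ∏ j ∈ Finset.range n, (1 - x * q ^ j)

section

variable {K : Type*} [Field K] (p : K)

theorem qPoch_zero (y : K) : qPoch y p 0 = 1 := by
  simp [qPoch]

theorem qPoch_succ (y : K) (n : ℕ) : qPoch y p (n + 1) = qPoch y p n * (1 - y * p ^ n) := by
  simp [qPoch, prod_range_succ]

theorem qPoch_add (y : K) (a b : ℕ) : qPoch y p (a + b) = qPoch y p a * qPoch (y * p ^ a) p b := by
  simp only [qPoch, prod_range_add, pow_add, mul_assoc]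

theorem qPoch_succ' (y : K) (n : ℕ) : qPoch y p (n + 1) = (1 - y) * qPoch (y * p) p n := by
  rw [add_comm, qPoch_add, pow_one]
  simp [qPoch]

variable {p}

theorem one_sub_pow_succ_ne_zero {k : ℕ} (hp : qPoch p p (k + 1) ≠ 0) : 1 - p ^ (k + 1) ≠ 0 := by
  rw [qPoch_succ, ← pow_succ'] at hp
  exact right_ne_zero_of_mul hp

theorem one_sub_pow_succ_mul_inv_qPoch_succ {k : ℕ} (hp : qPoch p p (k + 1) ≠ 0) :
    (1 - p ^ (k + 1)) * (qPoch p p (k + 1))⁻¹ = (qPoch p p k)⁻¹ := by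
  have := one_sub_pow_succ_ne_zero hp
  rw [qPoch_succ, ← pow_succ']
  field_simp

-- Gauss's `q`-binomial theorem, induction via `(y; p)_{n+1} = (1 - y) (y p; p)_n`: the identity
-- `1 - p^(a+b) = (1 - p^a) + p^a (1 - p^b)` splits each coefficient of index `a + b = n + 1`
-- into the two contributions coming from index `n`.
theorem qPoch_div_qPoch_self_eq_sum (hp : ∀ n, qPoch p p n ≠ 0) (n : ℕ) (y : K) :
    qPoch y p n / qPoch p p n =
      ∑ ab ∈ antidiagonal n, (-y) ^ ab.1 * p ^ ab.1.choose 2 / (qPoch p p ab.1 * qPoch p p ab.2) := by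
  induction n generalizing y with
  | zero => simp [qPoch_zero]
  | succ n ih =>
    refine mul_left_cancel₀ (one_sub_pow_succ_ne_zero (hp (n + 1))) ?_
    calc (1 - p ^ (n + 1)) * (qPoch y p (n + 1) / qPoch p p (n + 1))
        = (1 - y) * (qPoch (y * p) p n / qPoch p p n) := by
          rw [qPoch_succ', div_eq_mul_inv, div_eq_mul_inv,
            ← one_sub_pow_succ_mul_inv_qPoch_succ (k := n) (hp _)]
          ring
      _ = ∑ ab ∈ antidiagonal n, (1 - p ^ (ab.1 + 1)) * ((-y) ^ (ab.1 + 1) *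
              p ^ (ab.1 + 1).choose 2 / (qPoch p p (ab.1 + 1) * qPoch p p ab.2)) +
            ∑ ab ∈ antidiagonal n, p ^ ab.1 * (1 - p ^ (ab.2 + 1)) * ((-y) ^ ab.1 *
              p ^ ab.1.choose 2 / (qPoch p p ab.1 * qPoch p p (ab.2 + 1))) := by
          rw [ih, ← sum_add_distrib, mul_sum]
          refine sum_congr rfl fun ab _ => ?_
          simp only [div_eq_mul_inv, mul_inv, Nat.choose_succ_succ, Nat.choose_one_right]
          rw [← one_sub_pow_succ_mul_inv_qPoch_succ (k := ab.1) (hp _),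
            ← one_sub_pow_succ_mul_inv_qPoch_succ (k := ab.2) (hp _)]
          ring
      _ = ∑ ab ∈ antidiagonal (n + 1), ((1 - p ^ ab.1) + p ^ ab.1 * (1 - p ^ ab.2)) *
            ((-y) ^ ab.1 * p ^ ab.1.choose 2 / (qPoch p p ab.1 * qPoch p p ab.2)) := by
          simp only [add_mul, sum_add_distrib]
          rw [Nat.sum_antidiagonal_succ, Nat.sum_antidiagonal_succ']
          simp
      _ = (1 - p ^ (n + 1)) * ∑ ab ∈ antidiagonal (n + 1),
            (-y) ^ ab.1 * p ^ ab.1.choose 2 / (qPoch p p ab.1 * qPoch p p ab.2) := by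
          rw [mul_sum]
          refine sum_congr rfl fun ab hab => ?_
          rw [← mem_antidiagonal.mp hab, pow_add]
          ring

theorem qPoch_sum_eq_prod (y : K) (m : ℕ) (d : Fin m → ℕ) :
    qPoch y p (∑ i, d i) =
      ∏ i, qPoch (y * p ^ (∑ l ∈ Finset.univ.filter (fun l => l < i), d l)) p (d i) := by
  induction m generalizing y with
  | zero => simp [qPoch_zero]
  | succ m ih =>
    rw [Fin.sum_univ_succ, qPoch_add, Fin.prod_univ_succ, ih]
    congr 1
    · simp
    · refine prod_congr rfl fun i _ => ?_
      rw [mul_assoc, ← pow_add, sum_filter, sum_filter, Fin.sum_univ_succ]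
      simp [Fin.succ_lt_succ_iff, Fin.succ_pos]

end

theorem Nat.two_mul_choose_two_add_self (a : ℕ) : 2 * a.choose 2 + a = a ^ 2 := by
  induction a with
  | zero => simp
  | succ a ih => rw [Nat.choose_succ_succ, Nat.choose_one_right]; linarith

section

variable {K : Type*} [Field K] {q : K}

theorem qPoch_mul_sq_pow_div_eq_sum (hq : q ≠ 0) (hp : ∀ n, qPoch (q ^ 2) (q ^ 2) n ≠ 0)
    (y : K) (s n : ℕ) :
    qPoch (y * (q ^ 2) ^ s) (q ^ 2) n / qPoch (q ^ 2) (q ^ 2) n =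
      ∑ a : Fin (n + 1), (-y * q⁻¹) ^ (a : ℕ) * q ^ ((a : ℕ) ^ 2 + 2 * ((a : ℕ) * s)) /
        (qPoch (q ^ 2) (q ^ 2) a * qPoch (q ^ 2) (q ^ 2) (n - a)) := by
  rw [qPoch_div_qPoch_self_eq_sum hp, Nat.sum_antidiagonal_eq_sum_range_succ_mk,
    ← Fin.sum_univ_eq_sum_range]
  refine sum_congr rfl fun a _ => ?_
  rw [← Nat.two_mul_choose_two_add_self, mul_pow, inv_pow]
  field_simp
  ring

end

theorem stmt0 {K : Type*} [Field K] (q x : K) (hq : q ≠ 0)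
    (hpoch : ∀ n : ℕ, qPoch (q ^ 2) (q ^ 2) n ≠ 0)
    (m : ℕ) (d : Fin m → ℕ) :
    qPoch (x ^ 2) (q ^ 2) (∑ i, d i) / ∏ i, qPoch (q ^ 2) (q ^ 2) (d i)
      = ∑ α : (i : Fin m) → Fin (d i + 1),
          (-(x ^ 2) * q⁻¹) ^ (∑ i, ((α i : ℕ))) *
            q ^ ((∑ i, ((α i : ℕ)) ^ 2)
                + 2 * ∑ i, (α i : ℕ) * (∑ l ∈ Finset.univ.filter (fun l => l < i), d l)) /
          ((∏ i, qPoch (q ^ 2) (q ^ 2) ((α i : ℕ))) *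
            ∏ i, qPoch (q ^ 2) (q ^ 2) (d i - (α i : ℕ))) := by
  rw [qPoch_sum_eq_prod, ← prod_div_distrib]
  simp only [qPoch_mul_sq_pow_div_eq_sum hq hpoch]
  rw [prod_univ_sum, Fintype.piFinset_univ]
  refine sum_congr rfl fun α _ => ?_
  rw [prod_div_distrib, prod_mul_distrib, prod_mul_distrib, prod_pow_eq_pow_sum,
    prod_pow_eq_pow_sum, sum_add_distrib, mul_sum]
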